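/- arXiv:1705.02537 — 2 statements merged into one kernel-verified Lean document; each statement's English description precedes it below -/
import Mathlib

section
/- Let G be a finite simple graph admitting an ordered clique partition C_1, ..., C_k in which every edge has width at most b, and suppose G contains an induced subgraph isomorphic to the complete bipartite graph K_{p,p} with p ≥ 1. Then p ≤ b + 1. -/
/-- `g` is an ordered clique partition of `G`: the fibers of `g` are cliques of `G`. -/
def IsOrderedCliquePartition {V : Type*} (G : SimpleGraph V) (g : V → ℕ) : Prop :=
  ∀ v w, g v = g w → v = w ∨ G.Adj v w

lemma biclique_aux (p b : ℕ) (u v : Fin p → ℕ) (hv : Function.Injective v)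
    (hd : ∀ i j, Nat.dist (u i) (v j) ≤ b) (i0 : Fin p) (hmin : ∀ j, u i0 ≤ v j) :
    p ≤ b + 1 := by
  have hsub : Finset.univ.image v ⊆ Finset.Icc (u i0) (u i0 + b) := by
    intro x hx
    simp only [Finset.mem_image, Finset.mem_univ, true_and] at hx
    obtain ⟨j, rfl⟩ := hx
    have h1 := hmin j
    have h2 := hd i0 j
    rw [Nat.dist_eq_sub_of_le h1] at h2; rw [Finset.mem_Icc]
    omega
  have h3 : (Finset.univ.image v).card = p := by
    rw [Finset.card_image_of_injective _ hv, Finset.card_univ, Fintype.card_fin]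
  have h4 := Finset.card_le_card hsub
  rw [h3, Nat.card_Icc] at h4
  omega

/-- If a finite graph `G` admits an ordered clique partition all of whose edge widths are at
most `b`, and `G` contains an induced subgraph isomorphic to `K_{p,p}` with `p ≥ 1`, then
`p ≤ b + 1`. -/
theorem biclique_le_width_succ {V : Type*} [Fintype V] (G : SimpleGraph V) (p b : ℕ)
    (hp : 1 ≤ p) (g : V → ℕ) (hg : IsOrderedCliquePartition G g)
    (hw : ∀ v w, G.Adj v w → Nat.dist (g v) (g w) ≤ b)
    (he : Nonempty (completeBipartiteGraph (Fin p) (Fin p) ↪g G)) :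
    p ≤ b + 1 := by
  obtain ⟨f⟩ := he
  set u : Fin p → ℕ := fun i => g (f (Sum.inl i)) with hu
  set v : Fin p → ℕ := fun j => g (f (Sum.inr j)) with hvdef
  have hui : Function.Injective u := by
    intro i j h
    rcases hg _ _ h with h' | h'
    · exact Sum.inl_injective (f.injective h')
    · rw [f.map_adj_iff] at h'; simp at h'
  have hvi : Function.Injective v := by
    intro i j h
    rcases hg _ _ h with h' | h'
    · exact Sum.inr_injective (f.injective h')
    · rw [f.map_adj_iff] at h'; simp at h'
  have hd : ∀ i j, Nat.dist (u i) (v j) ≤ b := by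
    intro i j
    apply hw
    rw [f.map_adj_iff]
    simp
  have hne : Nonempty (Fin p) := ⟨⟨0, hp⟩⟩
  obtain ⟨i0, -, hi0⟩ := Finset.exists_min_image Finset.univ u ⟨⟨0, hp⟩, Finset.mem_univ _⟩
  obtain ⟨j0, -, hj0⟩ := Finset.exists_min_image Finset.univ v ⟨⟨0, hp⟩, Finset.mem_univ _⟩
  rcases le_total (u i0) (v j0) with h | h
  · exact biclique_aux p b u v hvi hd i0 fun j => le_trans h (hj0 j (Finset.mem_univ _))
  · exact biclique_aux p b v u hui (fun i j => by rw [Nat.dist_comm]; exact hd j i) j0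
      fun i => le_trans h (hi0 i (Finset.mem_univ _))
end

section
/- Let P be a finite partially ordered set and let G be its incomparability graph (vertices are the elements of P, with two distinct vertices adjacent exactly when they are incomparable in P). If G contains an induced star with s leaves (an induced subgraph isomorphic to K_{1,s}), then every ordered clique partition of G has an edge of width at least (s−1)/2; that is, CCW(G) ≥ (s−1)/2. -/
/-- The clique cover width of `G`: the least `b` such that some ordered clique partition of
`G` has all edge widths at most `b`. -/
noncomputable def CCW {V : Type*} (G : SimpleGraph V) : ℕ :=
  sInf {b : ℕ | ∃ g : V → ℕ, IsOrderedCliquePartition G g ∧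
    ∀ v w, G.Adj v w → Nat.dist (g v) (g w) ≤ b}

lemma aux_inj_dist (s : ℕ) (hs : 1 ≤ s) (f : Fin s → ℕ) (hf : Function.Injective f) :
    ∃ i j, s - 1 ≤ Nat.dist (f i) (f j) := by
  classical
  set t : Finset ℕ := Finset.image f Finset.univ with ht
  have hcard : t.card = s := by
    rw [ht, Finset.card_image_of_injective _ hf, Finset.card_univ, Fintype.card_fin]
  have hne : t.Nonempty := by
    rw [← Finset.card_pos, hcard]; omega
  have hsub : t ⊆ Finset.Icc (t.min' hne) (t.max' hne) := by
    intro x hx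
    exact Finset.mem_Icc.mpr ⟨Finset.min'_le t x hx, Finset.le_max' t x hx⟩
  have hle : s ≤ t.max' hne - t.min' hne + 1 := by
    have h1 := Finset.card_le_card hsub
    have h2 : t.min' hne ≤ t.max' hne := t.min'_le _ (t.max'_mem hne)
    rw [hcard, Nat.card_Icc] at h1
    omega
  obtain ⟨i, _, hi⟩ := Finset.mem_image.mp (t.max'_mem hne)
  obtain ⟨j, _, hj⟩ := Finset.mem_image.mp (t.min'_mem hne)
  refine ⟨i, j, ?_⟩
  rw [hi, hj, Nat.dist]
  omega

/-- Let `G` be the incomparability graph of a finite poset `P` (distinct vertices adjacent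
iff incomparable).  If `G` contains an induced star with `s ≥ 1` leaves, then every ordered
clique partition of `G` has an edge of width at least `(s-1)/2`; that is,
`CCW(G) ≥ (s-1)/2`. -/
theorem incomparability_star_ccw_lowerBound {P : Type*} [Fintype P] [PartialOrder P]
    (G : SimpleGraph P) (hG : ∀ a b : P, G.Adj a b ↔ a ≠ b ∧ ¬a ≤ b ∧ ¬b ≤ a)
    (s : ℕ) (hs : 1 ≤ s)
    (hstar : Nonempty (completeBipartiteGraph (Fin 1) (Fin s) ↪g G)) :
    (∀ g : P → ℕ, IsOrderedCliquePartition G g →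
      ∃ v w : P, G.Adj v w ∧ ((s : ℚ) - 1) / 2 ≤ (Nat.dist (g v) (g w) : ℚ)) ∧
    ((s : ℚ) - 1) / 2 ≤ (CCW G : ℚ) := by
  obtain ⟨e⟩ := hstar
  set c : P := e (Sum.inl 0) with hc
  have hleaf : ∀ k : Fin s, G.Adj c (e (Sum.inr k)) := by
    intro k
    rw [hc, e.map_adj_iff]
    simp [completeBipartiteGraph]
  have hnonadj : ∀ k l : Fin s, ¬ G.Adj (e (Sum.inr k)) (e (Sum.inr l)) := by
    intro k l h
    rw [e.map_adj_iff] at h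
    simp [completeBipartiteGraph] at h
  have main : ∀ g : P → ℕ, IsOrderedCliquePartition G g →
      ∃ v w : P, G.Adj v w ∧ ((s : ℚ) - 1) / 2 ≤ (Nat.dist (g v) (g w) : ℚ) := by
    intro g hg
    have hinj : Function.Injective (fun k : Fin s => g (e (Sum.inr k))) := by
      intro k l h
      rcases hg _ _ h with h1 | h2
      · simpa using e.injective h1
      · exact absurd h2 (hnonadj k l)
    obtain ⟨i, j, hij⟩ := aux_inj_dist s hs _ hinj
    have htri : Nat.dist (g (e (Sum.inr i))) (g (e (Sum.inr j))) ≤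
        Nat.dist (g c) (g (e (Sum.inr i))) + Nat.dist (g c) (g (e (Sum.inr j))) := by
      rw [Nat.dist_comm (g c)]
      exact Nat.dist.triangle_inequality _ _ _
    set d1 := Nat.dist (g c) (g (e (Sum.inr i)))
    set d2 := Nat.dist (g c) (g (e (Sum.inr j)))
    have hsum : s - 1 ≤ d1 + d2 := le_trans hij htri
    have hq : (s : ℚ) - 1 ≤ (d1 : ℚ) + (d2 : ℚ) := by
      have : ((s - 1 : ℕ) : ℚ) ≤ ((d1 + d2 : ℕ) : ℚ) := by exact_mod_cast hsum
      rw [Nat.cast_sub hs] at this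
      push_cast at this ⊢
      linarith
    rcases le_total d1 d2 with hle | hle
    · exact ⟨c, e (Sum.inr j), hleaf j, by
        have : (d1 : ℚ) ≤ (d2 : ℚ) := by exact_mod_cast hle
        linarith⟩
    · exact ⟨c, e (Sum.inr i), hleaf i, by
        have : (d2 : ℚ) ≤ (d1 : ℚ) := by exact_mod_cast hle
        linarith⟩
  refine ⟨main, ?_⟩
  have hSne : {b : ℕ | ∃ g : P → ℕ, IsOrderedCliquePartition G g ∧
      ∀ v w, G.Adj v w → Nat.dist (g v) (g w) ≤ b}.Nonempty := by
    classical
    refine ⟨Fintype.card P, fun v => (Fintype.equivFin P v : ℕ), ?_, ?_⟩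
    · intro v w h
      left
      exact (Fintype.equivFin P).injective (Fin.ext h)
    · intro v w _
      have h1 : (Fintype.equivFin P v : ℕ) < Fintype.card P := (Fintype.equivFin P v).2
      have h2 : (Fintype.equivFin P w : ℕ) < Fintype.card P := (Fintype.equivFin P w).2
      dsimp only
      rw [Nat.dist]
      omega
  obtain ⟨g, hg, hb⟩ := Nat.sInf_mem hSne
  obtain ⟨v, w, hvw, hd⟩ := main g hg
  have : Nat.dist (g v) (g w) ≤ CCW G := hb v w hvw
  calc ((s : ℚ) - 1) / 2 ≤ (Nat.dist (g v) (g w) : ℚ) := hd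
    _ ≤ (CCW G : ℚ) := by exact_mod_cast this
end
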